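/- Let ψ and ψ̃ be two unit vectors in ℂ^d ⊗ ℂ^d with Schmidt decompositions ψ = Σ_{i=1}^d λ_i u_i ⊗ v_i and ψ̃ = Σ_{i=1}^d μ_i ũ_i ⊗ ṽ_i, where {u_i}, {v_i}, {ũ_i}, {ṽ_i} are orthonormal families in ℂ^d, and λ_1 ≥ λ_2 ≥ … ≥ λ_d ≥ 0 and μ_1 ≥ μ_2 ≥ … ≥ μ_d ≥ 0. Then the ℓ²-distance of the coefficient sequences is bounded by the norm distance of the vectors: ‖(λ_i)_i − (μ_i)_i‖₂ ≤ ‖ψ − ψ̃‖. -/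

import Mathlib

open scoped BigOperators Kronecker ComplexOrder
open Matrix

noncomputable section

abbrev Op (n : ℕ) := Matrix (Fin n) (Fin n) ℂ

def inn {I : Type*} [Fintype I] (v w : I → ℂ) : ℂ := ∑ i, star (v i) * w i

def nrm {I : Type*} [Fintype I] (v : I → ℂ) : ℝ := Real.sqrt (inn v v).re

def IsPOVM {n m : ℕ} (A : Fin m → Op n) : Prop :=
  (∀ a, (A a).PosSemidef) ∧ (∑ a, A a) = 1

def IsPVM {n m : ℕ} (A : Fin m → Op n) : Prop :=
  (∀ a, (A a).IsHermitian ∧ A a * A a = A a) ∧ (∑ a, A a) = 1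

structure Game (q m : ℕ) where
  nu : Fin q → Fin q → ℝ
  nu_nonneg : ∀ x y, 0 ≤ nu x y
  nu_sum : (∑ x, ∑ y, nu x y) = 1
  D : Fin m → Fin m → Fin q → Fin q → Bool

structure Strategy (q m nA nB : ℕ) where
  psi : Fin nA × Fin nB → ℂ
  psi_unit : inn psi psi = 1
  A : Fin q → Fin m → Op nA
  B : Fin q → Fin m → Op nB
  A_povm : ∀ x, IsPOVM (A x)
  B_povm : ∀ y, IsPOVM (B y)

def corrRaw {q m nA nB : ℕ} (psi : Fin nA × Fin nB → ℂ)
    (A : Fin q → Fin m → Op nA) (B : Fin q → Fin m → Op nB)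
    (x y : Fin q) (a b : Fin m) : ℂ :=
  inn psi ((A x a ⊗ₖ B y b).mulVec psi)

def Strategy.corr {q m nA nB : ℕ} (S : Strategy q m nA nB) :
    Fin q → Fin q → Fin m → Fin m → ℂ :=
  corrRaw S.psi S.A S.B

def winProbRaw {q m nA nB : ℕ} (G : Game q m) (psi : Fin nA × Fin nB → ℂ)
    (A : Fin q → Fin m → Op nA) (B : Fin q → Fin m → Op nB) : ℝ :=
  ∑ x, ∑ y, G.nu x y *
    ∑ a, ∑ b, (if G.D a b x y then (1:ℝ) else 0) * (corrRaw psi A B x y a b).re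

def winProb {q m nA nB : ℕ} (G : Game q m) (S : Strategy q m nA nB) : ℝ :=
  winProbRaw G S.psi S.A S.B

def qval {q m : ℕ} (G : Game q m) : ℝ :=
  sSup {w : ℝ | ∃ (nA nB : ℕ) (S : Strategy q m nA nB), winProb G S = w}

def margA {q : ℕ} (nu : Fin q → Fin q → ℝ) (x : Fin q) : ℝ := ∑ y, nu x y
def margB {q : ℕ} (nu : Fin q → Fin q → ℝ) (y : Fin q) : ℝ := ∑ x, nu x y

def dsyncRaw {q m nA nB : ℕ} (psi : Fin nA × Fin nB → ℂ)
    (A : Fin q → Fin m → Op nA) (B : Fin q → Fin m → Op nB) (mu : Fin q → ℝ) : ℝ :=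
  1 - ∑ x, mu x * ∑ a, (corrRaw psi A B x x a a).re

def Strategy.dsync {q m nA nB : ℕ} (S : Strategy q m nA nB) (mu : Fin q → ℝ) : ℝ :=
  dsyncRaw S.psi S.A S.B mu

def Game.Symm {q m : ℕ} (G : Game q m) : Prop :=
  (∀ x y, G.nu x y = G.nu y x) ∧ ∀ a b x y, G.D a b x y = G.D b a y x

def Game.Synchronous {q m : ℕ} (G : Game q m) : Prop :=
  G.Symm ∧ (∀ x, 0 < G.nu x x) ∧ ∀ x a b, a ≠ b → G.D a b x x = false

def Game.BetaSync {q m : ℕ} (G : Game q m) (β : ℝ) : Prop :=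
  G.Synchronous ∧ ∀ x, β * ∑ y, G.nu x y ≤ G.nu x x

def Game.Perfect {q m : ℕ} (G : Game q m) : Prop :=
  ∃ (nA nB : ℕ) (S : Strategy q m nA nB), winProb G S = 1

def IsPME {q m n : ℕ} (S : Strategy q m n n) : Prop :=
  (∀ x, IsPVM (S.A x)) ∧
  ∃ U : Op n, Uᴴ * U = 1 ∧
    (∀ p, S.psi p = ((Real.sqrt n)⁻¹ : ℂ) * ∑ i, U p.1 i * U p.2 i) ∧
    (∀ x a, S.B x a = U * (Uᴴ * S.A x a * U)ᵀ * Uᴴ)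

def dilTarget {nA nB kA kB : ℕ} (psi : Fin nA × Fin nB → ℂ)
    (aux : Fin kA × Fin kB → ℂ) :
    (Fin nA × Fin kA) × (Fin nB × Fin kB) → ℂ :=
  fun p => psi (p.1.1, p.2.1) * aux (p.1.2, p.2.2)

def DilIneqs {q m nA nB tA tB kA kB : ℕ}
    (S : Strategy q m nA nB) (T : Strategy q m tA tB)
    (VA : Matrix (Fin tA × Fin kA) (Fin nA) ℂ)
    (VB : Matrix (Fin tB × Fin kB) (Fin nB) ℂ)
    (aux : Fin kA × Fin kB → ℂ) (ε : ℝ) (mu : Fin q → Fin q → ℝ) : Prop :=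
  nrm (fun p => (VA ⊗ₖ VB).mulVec S.psi p - dilTarget T.psi aux p) ≤ ε ∧
  Real.sqrt (∑ x, margA mu x * ∑ a,
    (nrm (fun p => (VA ⊗ₖ VB).mulVec ((S.A x a ⊗ₖ (1 : Op nB)).mulVec S.psi) p
      - dilTarget ((T.A x a ⊗ₖ (1 : Op tB)).mulVec T.psi) aux p)) ^ 2) ≤ ε ∧
  Real.sqrt (∑ y, margB mu y * ∑ b,
    (nrm (fun p => (VA ⊗ₖ VB).mulVec (((1 : Op nA) ⊗ₖ S.B y b).mulVec S.psi) p
      - dilTarget (((1 : Op tA) ⊗ₖ T.B y b).mulVec T.psi) aux p)) ^ 2) ≤ ε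

def LocalDilation {q m nA nB tA tB : ℕ}
    (S : Strategy q m nA nB) (T : Strategy q m tA tB) (ε : ℝ)
    (mu : Fin q → Fin q → ℝ) : Prop :=
  ∃ (kA kB : ℕ) (VA : Matrix (Fin tA × Fin kA) (Fin nA) ℂ)
    (VB : Matrix (Fin tB × Fin kB) (Fin nB) ℂ) (aux : Fin kA × Fin kB → ℂ),
    VAᴴ * VA = 1 ∧ VBᴴ * VB = 1 ∧ inn aux aux = 1 ∧ DilIneqs S T VA VB aux ε mu

def SelfTestsPME {q m tA tB : ℕ} (G : Game q m) (T : Strategy q m tA tB)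
    (κ : ℝ → ℝ) (nuh : Fin q → Fin q → ℝ) : Prop :=
  ∀ ε : ℝ, 0 ≤ ε → ∀ (n : ℕ) (S : Strategy q m n n), IsPME S →
    qval G - ε ≤ winProb G S → LocalDilation S T (κ ε) nuh

def SelfTestsAll {q m tA tB : ℕ} (G : Game q m) (T : Strategy q m tA tB)
    (κ : ℝ → ℝ) (nuh : Fin q → Fin q → ℝ) : Prop :=
  ∀ ε : ℝ, 0 ≤ ε → ∀ (nA nB : ℕ) (S : Strategy q m nA nB),
    qval G - ε ≤ winProb G S → LocalDilation S T (κ ε) nuh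

def SelfTestsClass {q m tA tB : ℕ} (G : Game q m) (T : Strategy q m tA tB)
    (κ : ℝ → ℝ) (nuh : Fin q → Fin q → ℝ)
    (Cl : ∀ nA nB : ℕ, Strategy q m nA nB → Prop) : Prop :=
  ∀ ε : ℝ, 0 ≤ ε → ∀ (nA nB : ℕ) (S : Strategy q m nA nB), Cl nA nB S →
    qval G - ε ≤ winProb G S → LocalDilation S T (κ ε) nuh

def gamePoly {q m nA nB : ℕ} (G : Game q m) (S : Strategy q m nA nB) :
    Matrix (Fin nA × Fin nB) (Fin nA × Fin nB) ℂ :=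
  ∑ x, ∑ y, ∑ a, ∑ b,
    (((G.nu x y : ℝ) : ℂ) * (if G.D a b x y then 1 else 0)) • (S.A x a ⊗ₖ S.B y b)

def specGap {I : Type*} [Fintype I] [DecidableEq I] (M : Matrix I I ℂ) : ℝ :=
  if h : M.IsHermitian then
    (((Finset.univ.val.map h.eigenvalues).sort (· ≤ ·)).getD (Fintype.card I - 1) 0) -
    (((Finset.univ.val.map h.eigenvalues).sort (· ≤ ·)).getD (Fintype.card I - 2) 0)
  else 0

def rhoA {nA nB : ℕ} (psi : Fin nA × Fin nB → ℂ) : Op nA :=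
  Matrix.of fun i j => ∑ k, psi (i, k) * star (psi (j, k))

def rhoB {nA nB : ℕ} (psi : Fin nA × Fin nB → ℂ) : Op nB :=
  Matrix.of fun i j => ∑ k, psi (k, i) * star (psi (k, j))

def IsMaxEntG {I J : Type*} [Fintype I] [DecidableEq I] [Fintype J] (psi : I × J → ℂ) : Prop :=
  Fintype.card I = Fintype.card J ∧
  ∃ (e : I → I → ℂ) (f : I → J → ℂ),
    (∀ i j, inn (e i) (e j) = if i = j then 1 else 0) ∧
    (∀ i j, inn (f i) (f j) = if i = j then 1 else 0) ∧
    ∀ p, psi p = ((Real.sqrt (Fintype.card I))⁻¹ : ℂ) * ∑ i, e i p.1 * f i p.2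

def IsMaxEntIn {kA kB : ℕ} (v : Fin kA × Fin kB → ℂ) : Prop :=
  ∃ (d : ℕ), 0 < d ∧ ∃ (e : Fin d → Fin kA → ℂ) (f : Fin d → Fin kB → ℂ),
    (∀ i j, inn (e i) (e j) = if i = j then 1 else 0) ∧
    (∀ i j, inn (f i) (f j) = if i = j then 1 else 0) ∧
    ∀ p, v p = ((Real.sqrt d)⁻¹ : ℂ) * ∑ i, e i p.1 * f i p.2

def hsNorm {n : ℕ} (M : Op n) : ℝ := Real.sqrt (Mᴴ * M).trace.re

def Matrix.PosSemidef.sqrt {𝕜 : Type*} [RCLike 𝕜] {n : Type*} [Fintype n] [DecidableEq n]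
    {A : Matrix n n 𝕜} (hA : A.PosSemidef) : Matrix n n 𝕜 :=
  hA.1.eigenvectorUnitary.1 * diagonal ((↑) ∘ (Real.sqrt ·) ∘ hA.1.eigenvalues) *
    (star hA.1.eigenvectorUnitary : Matrix n n 𝕜)

def traceNorm {n : ℕ} (M : Op n) : ℝ :=
  ((Matrix.posSemidef_conjTranspose_mul_self M).sqrt).trace.re

/-!
Since `‖ψ‖² = ∑ λᵢ²` and `‖ψ̃‖² = ∑ μᵢ²`, it suffices to show `Re ⟨ψ, ψ̃⟩ ≤ ∑ λᵢ μᵢ`.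
Expanding, `⟨ψ, ψ̃⟩ = ∑ᵢⱼ λᵢ μⱼ ⟨uᵢ, ũⱼ⟩ ⟨vᵢ, ṽⱼ⟩`, and each product of overlaps has real part
at most `Dᵢⱼ = (|⟨uᵢ, ũⱼ⟩|² + |⟨vᵢ, ṽⱼ⟩|²) / 2`. The matrix `D` is the average of the entrywise
squared moduli of two unitary matrices, hence doubly stochastic; by Birkhoff's theorem it is a
convex combination of permutation matrices, and the rearrangement inequality for the similarly
ordered `λ` and `μ` gives `∑ᵢⱼ λᵢ μⱼ Dᵢⱼ ≤ ∑ᵢ λᵢ μᵢ`.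
-/

open Finset

theorem Monovary.dotProduct_mulVec_le_of_mem_doublyStochastic {R n : Type*} [Field R]
    [LinearOrder R] [IsStrictOrderedRing R] [Fintype n] [DecidableEq n] {f g : n → R}
    {D : Matrix n n R} (hfg : Monovary f g) (hD : D ∈ doublyStochastic R n) :
    f ⬝ᵥ (D *ᵥ g) ≤ f ⬝ᵥ g := by
  obtain ⟨w, hw0, hw1, rfl⟩ := exists_eq_sum_perm_of_mem_doublyStochastic hD
  calc f ⬝ᵥ ((∑ σ, w σ • σ.permMatrix R) *ᵥ g) = ∑ σ, w σ * (f ⬝ᵥ (g ∘ σ)) := by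
        simp only [Matrix.sum_mulVec, dotProduct_sum, smul_mulVec, dotProduct_smul,
          permMatrix_mulVec, smul_eq_mul]
    _ ≤ ∑ σ, w σ * (f ⬝ᵥ g) := by
        gcongr with σ
        · exact hw0 σ
        · exact hfg.sum_mul_comp_perm_le_sum_mul
    _ = f ⬝ᵥ g := by rw [← sum_mul, hw1, one_mul]

theorem Matrix.normSq_mem_doublyStochastic {n : Type*} [Fintype n] [DecidableEq n]
    {A : Matrix n n ℂ} (hA : A ∈ unitaryGroup n ℂ) :
    (of fun i j => Complex.normSq (A i j)) ∈ doublyStochastic ℝ n := by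
  rw [mem_doublyStochastic_iff_sum]
  refine ⟨fun i j => Complex.normSq_nonneg _, fun i => ?_, fun j => ?_⟩
  · have h := congr_fun₂ (mem_unitaryGroup_iff.mp hA) i i
    simp only [mul_apply, star_apply, one_apply_eq, RCLike.star_def, Complex.mul_conj] at h
    exact_mod_cast h
  · have h := congr_fun₂ (mem_unitaryGroup_iff'.mp hA) j j
    simp only [mul_apply, star_apply, one_apply_eq, RCLike.star_def, mul_comm _ (A _ j),
      Complex.mul_conj] at h
    exact_mod_cast h

theorem star_inn {I : Type*} [Fintype I] (v w : I → ℂ) : star (inn v w) = inn w v := by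
  simp only [inn, star_sum, star_mul', star_star, mul_comm]

theorem re_inn_sub_self {I : Type*} [Fintype I] (v w : I → ℂ) :
    (inn (v - w) (v - w)).re = (inn v v).re + (inn w w).re - 2 * (inn v w).re := by
  have h : inn (v - w) (v - w) = inn v v + inn w w - (inn v w + inn w v) := by
    simp only [inn, Pi.sub_apply, star_sub, sub_mul, mul_sub, sum_sub_distrib]
    ring
  rw [h, ← star_inn v w, RCLike.star_def, Complex.add_conj]
  simp only [Complex.sub_re, Complex.add_re, Complex.ofReal_re]

theorem Matrix.of_mem_unitaryGroup_of_inn {n : Type*} [Fintype n] [DecidableEq n]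
    {u : n → n → ℂ} (hu : ∀ i j, inn (u i) (u j) = if i = j then 1 else 0) :
    of u ∈ unitaryGroup n ℂ := by
  rw [mem_unitaryGroup_iff]
  ext i j
  simpa [inn, mul_apply, one_apply, eq_comm, mul_comm] using hu j i

theorem Matrix.normSq_inn_mem_doublyStochastic {n : Type*} [Fintype n] [DecidableEq n]
    {u w : n → n → ℂ} (hu : ∀ i j, inn (u i) (u j) = if i = j then 1 else 0)
    (hw : ∀ i j, inn (w i) (w j) = if i = j then 1 else 0) :
    (of fun i j => Complex.normSq (inn (u i) (w j))) ∈ doublyStochastic ℝ n := by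
  have h := normSq_mem_doublyStochastic
    (mul_mem (of_mem_unitaryGroup_of_inn hu) (Unitary.star_mem (of_mem_unitaryGroup_of_inn hw)))
  convert h using 4 with i j
  rw [← Complex.normSq_conj, ← RCLike.star_def, star_inn]
  simp [inn, mul_apply, mul_comm]

def schmidtVec {ι I J : Type*} [Fintype ι] (c : ι → ℝ) (u : ι → I → ℂ) (v : ι → J → ℂ) :
    I × J → ℂ :=
  fun p => ∑ i, (c i : ℂ) * u i p.1 * v i p.2

theorem inn_schmidtVec {ι I J : Type*} [Fintype ι] [Fintype I] [Fintype J] (c c' : ι → ℝ)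
    (u u' : ι → I → ℂ) (v v' : ι → J → ℂ) :
    inn (schmidtVec c u v) (schmidtVec c' u' v') =
      ∑ i, ∑ j, (c i * c' j : ℂ) * (inn (u i) (u' j) * inn (v i) (v' j)) := by
  calc inn (schmidtVec c u v) (schmidtVec c' u' v')
      = ∑ p : I × J, ∑ i, ∑ j, (c i * c' j : ℂ) *
          (star (u i p.1) * u' j p.1 * (star (v i p.2) * v' j p.2)) := by
        simp only [inn, schmidtVec, star_sum, sum_mul_sum, star_mul', Complex.star_def,
          Complex.conj_ofReal]
        exact sum_congr rfl fun _ _ => sum_congr rfl fun _ _ => sum_congr rfl fun _ _ => by ring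
    _ = ∑ i, ∑ j, ∑ p : I × J, (c i * c' j : ℂ) *
          (star (u i p.1) * u' j p.1 * (star (v i p.2) * v' j p.2)) := by
        rw [sum_comm]; exact sum_congr rfl fun _ _ => sum_comm
    _ = _ := by
        simp only [← mul_sum, inn, sum_mul_sum, Fintype.sum_prod_type]

theorem Complex.re_mul_le_normSq_add_normSq (a b : ℂ) :
    (a * b).re ≤ (normSq a + normSq b) / 2 := by
  rw [mul_re, normSq_apply, normSq_apply]
  nlinarith [sq_nonneg (a.re - b.re), sq_nonneg (a.im + b.im)]

theorem re_inn_schmidtVec_le_sum_mul {n : Type*} [Fintype n] [DecidableEq n] {lam mu : n → ℝ}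
    {u v ut vt : n → n → ℂ}
    (hu : ∀ i j, inn (u i) (u j) = if i = j then 1 else 0)
    (hv : ∀ i j, inn (v i) (v j) = if i = j then 1 else 0)
    (hut : ∀ i j, inn (ut i) (ut j) = if i = j then 1 else 0)
    (hvt : ∀ i j, inn (vt i) (vt j) = if i = j then 1 else 0)
    (hlam : ∀ i, 0 ≤ lam i) (hmu : ∀ i, 0 ≤ mu i) (hlm : Monovary lam mu) :
    (inn (schmidtVec lam u v) (schmidtVec mu ut vt)).re ≤ ∑ i, lam i * mu i := by
  set A := of fun i j => Complex.normSq (inn (u i) (ut j))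
  set B := of fun i j => Complex.normSq (inn (v i) (vt j))
  have hD : (2⁻¹ : ℝ) • A + (2⁻¹ : ℝ) • B ∈ doublyStochastic ℝ n :=
    convex_doublyStochastic (normSq_inn_mem_doublyStochastic hu hut)
      (normSq_inn_mem_doublyStochastic hv hvt) (by norm_num) (by norm_num) (by norm_num)
  calc (inn (schmidtVec lam u v) (schmidtVec mu ut vt)).re
      ≤ ∑ i, ∑ j, lam i * mu j * ((A i j + B i j) / 2) := by
        simp only [inn_schmidtVec, Complex.re_sum]
        gcongr with i _ j _
        rw [← Complex.ofReal_mul, Complex.re_ofReal_mul]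
        exact mul_le_mul_of_nonneg_left (Complex.re_mul_le_normSq_add_normSq _ _)
          (mul_nonneg (hlam i) (hmu j))
    _ = lam ⬝ᵥ (((2⁻¹ : ℝ) • A + (2⁻¹ : ℝ) • B) *ᵥ mu) := by
        simp only [dotProduct, mulVec, mul_sum]
        exact sum_congr rfl fun _ _ => sum_congr rfl fun _ _ => by simp; ring
    _ ≤ ∑ i, lam i * mu i := hlm.dotProduct_mulVec_le_of_mem_doublyStochastic hD

theorem re_inn_schmidtVec_self {ι I J : Type*} [Fintype ι] [DecidableEq ι] [Fintype I]
    [Fintype J] (c : ι → ℝ) {u : ι → I → ℂ} {v : ι → J → ℂ}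
    (hu : ∀ i j, inn (u i) (u j) = if i = j then 1 else 0)
    (hv : ∀ i j, inn (v i) (v j) = if i = j then 1 else 0) :
    (inn (schmidtVec c u v) (schmidtVec c u v)).re = ∑ i, c i ^ 2 := by
  simp [inn_schmidtVec, hu, hv, Complex.re_sum, sq]

theorem stmt15_general {d : ℕ} (psi psit : Fin d × Fin d → ℂ)
    (lam mu : Fin d → ℝ)
    (u v ut vt : Fin d → Fin d → ℂ)
    (hu : ∀ i j, inn (u i) (u j) = if i = j then 1 else 0)
    (hv : ∀ i j, inn (v i) (v j) = if i = j then 1 else 0)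
    (hut : ∀ i j, inn (ut i) (ut j) = if i = j then 1 else 0)
    (hvt : ∀ i j, inn (vt i) (vt j) = if i = j then 1 else 0)
    (hlam_nn : ∀ i, 0 ≤ lam i) (hmu_nn : ∀ i, 0 ≤ mu i)
    (hlam_anti : ∀ i j : Fin d, i ≤ j → lam j ≤ lam i)
    (hmu_anti : ∀ i j : Fin d, i ≤ j → mu j ≤ mu i)
    (hdec : ∀ p, psi p = ∑ i, (lam i : ℂ) * u i p.1 * v i p.2)
    (hdect : ∀ p, psit p = ∑ i, (mu i : ℂ) * ut i p.1 * vt i p.2) :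
    Real.sqrt (∑ i, (lam i - mu i) ^ 2) ≤ nrm (fun p => psi p - psit p) := by
  change _ ≤ nrm (psi - psit)
  obtain rfl : psi = schmidtVec lam u v := funext hdec
  obtain rfl : psit = schmidtVec mu ut vt := funext hdect
  have hoverlap := re_inn_schmidtVec_le_sum_mul hu hv hut hvt hlam_nn hmu_nn
    (Antitone.monovary hlam_anti hmu_anti)
  refine Real.sqrt_le_sqrt ?_
  rw [re_inn_sub_self, re_inn_schmidtVec_self lam hu hv, re_inn_schmidtVec_self mu hut hvt]
  simp only [sub_sq, sum_add_distrib, sum_sub_distrib, mul_assoc, ← mul_sum]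
  linarith

/-- the ℓ²-distance of ordered Schmidt coefficient sequences is
bounded by the norm distance of the vectors. -/
theorem stmt15 {d : ℕ} (psi psit : Fin d × Fin d → ℂ)
    (hpsi : inn psi psi = 1) (hpsit : inn psit psit = 1)
    (lam mu : Fin d → ℝ)
    (u v ut vt : Fin d → Fin d → ℂ)
    (hu : ∀ i j, inn (u i) (u j) = if i = j then 1 else 0)
    (hv : ∀ i j, inn (v i) (v j) = if i = j then 1 else 0)
    (hut : ∀ i j, inn (ut i) (ut j) = if i = j then 1 else 0)
    (hvt : ∀ i j, inn (vt i) (vt j) = if i = j then 1 else 0)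
    (hlam_nn : ∀ i, 0 ≤ lam i) (hmu_nn : ∀ i, 0 ≤ mu i)
    (hlam_anti : ∀ i j : Fin d, i ≤ j → lam j ≤ lam i)
    (hmu_anti : ∀ i j : Fin d, i ≤ j → mu j ≤ mu i)
    (hdec : ∀ p, psi p = ∑ i, (lam i : ℂ) * u i p.1 * v i p.2)
    (hdect : ∀ p, psit p = ∑ i, (mu i : ℂ) * ut i p.1 * vt i p.2) :
    Real.sqrt (∑ i, (lam i - mu i) ^ 2) ≤ nrm (fun p => psi p - psit p) :=
  stmt15_general psi psit lam mu u v ut vt hu hv hut hvt hlam_nn hmu_nn hlam_anti hmu_anti hdec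
    hdect

end
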